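/- Commutativity of forgetting: for any two variables p,q and forgetting operators δ_p, δ_q, the knowledge bases δ_p[δ_q[K]] and δ_q[δ_p[K]] are logically equivalent, both being equivalent to the canonical conservative retraction [K, L∖{p,q}]. -/
import Mathlib


inductive Fm (V : Type) : Type
  | bot : Fm V
  | var : V → Fm V
  | not : Fm V → Fm V
  | and : Fm V → Fm V → Fm V
  | or  : Fm V → Fm V → Fm V
  | imp : Fm V → Fm V → Fm V
  | iff : Fm V → Fm V → Fm V

def Fm.eval {V : Type} (v : V → Bool) : Fm V → Bool
  | .bot => false
  | .var p => v p
  | .not F => !(F.eval v)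
  | .and F G => F.eval v && G.eval v
  | .or F G => F.eval v || G.eval v
  | .imp F G => !(F.eval v) || G.eval v
  | .iff F G => F.eval v == G.eval v

/-- The set of propositional variables occurring in a formula. -/
def Fm.vars {V : Type} : Fm V → Set V
  | .bot => ∅
  | .var q => {q}
  | .not F => F.vars
  | .and F G => F.vars ∪ G.vars
  | .or F G => F.vars ∪ G.vars
  | .imp F G => F.vars ∪ G.vars
  | .iff F G => F.vars ∪ G.vars

/-- Logical entailment `K ⊨ F`. -/
def Entails {V : Type} (K : Set (Fm V)) (F : Fm V) : Prop :=
  ∀ v : V → Bool, (∀ G ∈ K, G.eval v = true) → F.eval v = true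

/-- The canonical conservative retraction `[K, L∖{p}]`:
all formulas not containing `p` entailed by `K`. -/
def Retract {V : Type} (K : Set (Fm V)) (p : V) : Set (Fm V) :=
  {H | p ∉ H.vars ∧ Entails K H}

/-- `δ` is a forgetting operator for the variable `p`: its outputs avoid `p`, and
`δ F G` is logically equivalent to the canonical conservative retraction `[{F,G}, L∖{p}]`. -/
structure IsForgetting {V : Type} (p : V) (δ : Fm V → Fm V → Fm V) : Prop where
  avoid : ∀ F G, p ∉ (δ F G).vars
  equiv : ∀ F G (v : V → Bool),
    (δ F G).eval v = true ↔ ∀ H ∈ Retract ({F, G} : Set (Fm V)) p, H.eval v = true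

/-- The canonical conservative retraction `[K, L∖{p,q}]`. -/
def Retract2 {V : Type} (K : Set (Fm V)) (p q : V) : Set (Fm V) :=
  {H | p ∉ H.vars ∧ q ∉ H.vars ∧ Entails K H}


set_option linter.unusedSectionVars false

section Aux
variable {V : Type} [DecidableEq V]

lemma eval_congr (F : Fm V) (v w : V → Bool) (h : ∀ x ∈ F.vars, v x = w x) :
    F.eval v = F.eval w := by
  induction F with
  | bot => rfl
  | var x => exact h x rfl
  | not F ih => simp [Fm.eval, ih h]
  | and F G ihF ihG =>
      simp [Fm.eval, ihF (fun x hx => h x (Set.mem_union_left _ hx)),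
        ihG (fun x hx => h x (Set.mem_union_right _ hx))]
  | or F G ihF ihG =>
      simp [Fm.eval, ihF (fun x hx => h x (Set.mem_union_left _ hx)),
        ihG (fun x hx => h x (Set.mem_union_right _ hx))]
  | imp F G ihF ihG =>
      simp [Fm.eval, ihF (fun x hx => h x (Set.mem_union_left _ hx)),
        ihG (fun x hx => h x (Set.mem_union_right _ hx))]
  | iff F G ihF ihG =>
      simp [Fm.eval, ihF (fun x hx => h x (Set.mem_union_left _ hx)),
        ihG (fun x hx => h x (Set.mem_union_right _ hx))]

def sub (p : V) (b : Bool) : Fm V → Fm V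
  | .bot => .bot
  | .var x => if x = p then (if b then Fm.not .bot else .bot) else .var x
  | .not F => .not (sub p b F)
  | .and F G => .and (sub p b F) (sub p b G)
  | .or F G => .or (sub p b F) (sub p b G)
  | .imp F G => .imp (sub p b F) (sub p b G)
  | .iff F G => .iff (sub p b F) (sub p b G)

lemma sub_vars (p : V) (b : Bool) (F : Fm V) :
    ∀ x ∈ (sub p b F).vars, x ∈ F.vars ∧ x ≠ p := by
  induction F with
  | bot => intro x hx; exact absurd hx (by simp [sub, Fm.vars])
  | var y =>
      intro x hx
      by_cases h : y = p
      · subst h; cases b <;> simp [sub, Fm.vars] at hx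
      · simp [sub, h, Fm.vars] at hx
        subst hx; exact ⟨rfl, h⟩
  | not F ih => exact ih
  | and F G ihF ihG =>
      intro x hx
      rcases hx with hx | hx
      · exact ⟨Set.mem_union_left _ (ihF x hx).1, (ihF x hx).2⟩
      · exact ⟨Set.mem_union_right _ (ihG x hx).1, (ihG x hx).2⟩
  | or F G ihF ihG =>
      intro x hx
      rcases hx with hx | hx
      · exact ⟨Set.mem_union_left _ (ihF x hx).1, (ihF x hx).2⟩
      · exact ⟨Set.mem_union_right _ (ihG x hx).1, (ihG x hx).2⟩
  | imp F G ihF ihG =>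
      intro x hx
      rcases hx with hx | hx
      · exact ⟨Set.mem_union_left _ (ihF x hx).1, (ihF x hx).2⟩
      · exact ⟨Set.mem_union_right _ (ihG x hx).1, (ihG x hx).2⟩
  | iff F G ihF ihG =>
      intro x hx
      rcases hx with hx | hx
      · exact ⟨Set.mem_union_left _ (ihF x hx).1, (ihF x hx).2⟩
      · exact ⟨Set.mem_union_right _ (ihG x hx).1, (ihG x hx).2⟩

lemma sub_eval (p : V) (b : Bool) (F : Fm V) (v : V → Bool) :
    (sub p b F).eval v = F.eval (Function.update v p b) := by
  induction F with
  | bot => rfl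
  | var x =>
      by_cases h : x = p
      · subst h; cases b <;> simp [sub, Fm.eval]
      · simp [sub, h, Fm.eval, Function.update_of_ne h]
  | not F ih => simp [sub, Fm.eval, ih]
  | and F G ihF ihG => simp [sub, Fm.eval, ihF, ihG]
  | or F G ihF ihG => simp [sub, Fm.eval, ihF, ihG]
  | imp F G ihF ihG => simp [sub, Fm.eval, ihF, ihG]
  | iff F G ihF ihG => simp [sub, Fm.eval, ihF, ihG]

lemma forget_char {p : V} {δ : Fm V → Fm V → Fm V} (h : IsForgetting p δ)
    (F G : Fm V) (v : V → Bool) :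
    (δ F G).eval v = true ↔
      ∃ b, F.eval (Function.update v p b) = true ∧ G.eval (Function.update v p b) = true := by
  rw [h.equiv]
  constructor
  · intro hall
    set H : Fm V := .or (.and (sub p true F) (sub p true G))
      (.and (sub p false F) (sub p false G)) with hH
    have hmem : H ∈ Retract ({F, G} : Set (Fm V)) p := by
      constructor
      · intro hpv
        rcases hpv with (h1 | h1) | (h1 | h1) <;>
          exact (sub_vars _ _ _ _ h1).2 rfl
      · intro w hw
        have hF := hw F (by simp)
        have hG := hw G (by simp)
        have key : (sub p (w p) F).eval w = true ∧ (sub p (w p) G).eval w = true := by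
          rw [sub_eval, sub_eval, Function.update_eq_self]
          exact ⟨hF, hG⟩
        cases hwp : w p <;> rw [hwp] at key <;> simp [hH, Fm.eval] <;> tauto
    have := hall H hmem
    simp only [hH, Fm.eval, Bool.or_eq_true, Bool.and_eq_true, sub_eval] at this
    rcases this with h1 | h1
    · exact ⟨true, h1⟩
    · exact ⟨false, h1⟩
  · rintro ⟨b, hF, hG⟩ H ⟨hpH, hent⟩
    have hw : H.eval (Function.update v p b) = true := by
      apply hent
      intro G' hG'
      rcases hG' with rfl | rfl
      · exact hF
      · exact hG
    rw [← hw]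
    apply eval_congr
    intro x hx
    have hxp : x ≠ p := fun hxp => hpH (hxp ▸ hx : p ∈ H.vars)
    rw [Function.update_of_ne hxp]

lemma sat_image2 {p : V} {δ : Fm V → Fm V → Fm V} (h : IsForgetting p δ)
    (K : Set (Fm V)) (v : V → Bool) :
    (∀ H ∈ Set.image2 δ K K, H.eval v = true) ↔
      ∃ b, ∀ G ∈ K, G.eval (Function.update v p b) = true := by
  constructor
  · intro hall
    by_cases ht : ∀ G ∈ K, G.eval (Function.update v p true) = true
    · exact ⟨true, ht⟩
    · push_neg at ht
      obtain ⟨F, hFK, hFf⟩ := ht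
      refine ⟨false, fun G hGK => ?_⟩
      have := (forget_char h F G v).1 (hall _ (Set.mem_image2_of_mem hFK hGK))
      obtain ⟨b, hb1, hb2⟩ := this
      cases b
      · exact hb2
      · exact absurd hb1 hFf
  · rintro ⟨b, hb⟩ H hH
    obtain ⟨F, hF, G, hG, rfl⟩ := hH
    exact (forget_char h F G v).2 ⟨b, hb F hF, hb G hG⟩

lemma exists_update_swap (p q : V) (P : (V → Bool) → Prop) (v : V → Bool) :
    (∃ a b, P (Function.update (Function.update v p a) q b)) ↔
    (∃ a b, P (Function.update (Function.update v q a) p b)) := by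
  by_cases h : p = q
  · subst h
    simp [Function.update_idem]
  · constructor
    · rintro ⟨a, b, hP⟩
      rw [Function.update_comm h] at hP
      exact ⟨b, a, hP⟩
    · rintro ⟨a, b, hP⟩
      rw [Function.update_comm (Ne.symm h)] at hP
      exact ⟨b, a, hP⟩

def conj : List (Fm V) → Fm V
  | [] => .not .bot
  | F :: l => .and F (conj l)

lemma conj_eval (l : List (Fm V)) (v : V → Bool) :
    (conj l).eval v = true ↔ ∀ G ∈ l, G.eval v = true := by
  induction l with
  | nil => simp [conj, Fm.eval]
  | cons F l ih => simp [conj, Fm.eval, ih]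

lemma retract2_char (K : Set (Fm V)) (hK : K.Finite) (p q : V) (v : V → Bool) :
    (∀ H ∈ Retract2 K p q, H.eval v = true) ↔
      ∃ a b, ∀ G ∈ K, G.eval (Function.update (Function.update v q b) p a) = true := by
  constructor
  · intro hall
    set l : List (Fm V) := hK.toFinset.toList with hl
    have hmeml : ∀ G, G ∈ l ↔ G ∈ K := by
      intro G; rw [hl, Finset.mem_toList, Set.Finite.mem_toFinset]
    set C : Fm V := conj l with hC
    set H : Fm V := .or (.or (sub q true (sub p true C)) (sub q false (sub p true C)))
      (.or (sub q true (sub p false C)) (sub q false (sub p false C))) with hH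
    have hmem : H ∈ Retract2 K p q := by
      refine ⟨?_, ?_, ?_⟩
      · intro hpv
        rcases hpv with (h1 | h1) | (h1 | h1) <;>
          exact ((sub_vars _ _ _ _ (sub_vars _ _ _ _ h1).1).2) rfl
      · intro hpv
        rcases hpv with (h1 | h1) | (h1 | h1) <;>
          exact (sub_vars _ _ _ _ h1).2 rfl
      · intro w hw
        have hCw : C.eval w = true := (conj_eval _ _).2 (fun G hG => hw G ((hmeml G).1 hG))
        have key : (sub q (w q) (sub p (w p) C)).eval w = true := by
          rw [sub_eval, sub_eval, Function.update_eq_self, Function.update_eq_self]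
          exact hCw
        cases hwp : w p <;> cases hwq : w q <;> rw [hwp, hwq] at key <;>
          simp [hH, Fm.eval] <;> tauto
    have hHv := hall H hmem
    simp only [hH, Fm.eval, Bool.or_eq_true, sub_eval] at hHv
    have conv : ∀ a b, C.eval (Function.update (Function.update v q b) p a) = true →
        ∃ a b, ∀ G ∈ K, G.eval (Function.update (Function.update v q b) p a) = true := by
      intro a b hab
      exact ⟨a, b, fun G hG => (conj_eval _ _).1 hab G ((hmeml G).2 hG)⟩
    rcases hHv with (h1 | h1) | (h1 | h1)
    · exact conv true true h1
    · exact conv true false h1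
    · exact conv false true h1
    · exact conv false false h1
  · rintro ⟨a, b, hs⟩ H ⟨hpH, hqH, hent⟩
    have hw : H.eval (Function.update (Function.update v q b) p a) = true := hent _ hs
    rw [← hw]
    apply eval_congr
    intro x hx
    have hxp : x ≠ p := fun h => hpH (h ▸ hx : p ∈ H.vars)
    have hxq : x ≠ q := fun h => hqH (h ▸ hx : q ∈ H.vars)
    rw [Function.update_of_ne hxp, Function.update_of_ne hxq]

end Aux

/-- Commutativity of forgetting: `δ_p[δ_q[K]] ≡ δ_q[δ_p[K]] ≡ [K, L∖{p,q}]`. -/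
theorem stmt10 {V : Type} [Fintype V] (p q : V) (δp δq : Fm V → Fm V → Fm V)
    (hp : IsForgetting p δp) (hq : IsForgetting q δq) (K : Set (Fm V)) (hK : K.Finite) :
    (∀ v : V → Bool,
      (∀ H ∈ Set.image2 δp (Set.image2 δq K K) (Set.image2 δq K K), H.eval v = true) ↔
      (∀ H ∈ Set.image2 δq (Set.image2 δp K K) (Set.image2 δp K K), H.eval v = true)) ∧
    (∀ v : V → Bool,
      (∀ H ∈ Set.image2 δp (Set.image2 δq K K) (Set.image2 δq K K), H.eval v = true) ↔
      (∀ H ∈ Retract2 K p q, H.eval v = true)) := by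
  classical
  have hA : ∀ v : V → Bool,
      (∀ H ∈ Set.image2 δp (Set.image2 δq K K) (Set.image2 δq K K), H.eval v = true) ↔
      ∃ a b, ∀ G ∈ K, G.eval (Function.update (Function.update v p a) q b) = true := by
    intro v
    rw [sat_image2 hp]
    exact exists_congr fun a => sat_image2 hq K _
  have hB : ∀ v : V → Bool,
      (∀ H ∈ Set.image2 δq (Set.image2 δp K K) (Set.image2 δp K K), H.eval v = true) ↔
      ∃ a b, ∀ G ∈ K, G.eval (Function.update (Function.update v q a) p b) = true := by
    intro v
    rw [sat_image2 hq]
    exact exists_congr fun a => sat_image2 hp K _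
  constructor
  · intro v
    rw [hA v, hB v]
    exact exists_update_swap p q (fun w => ∀ G ∈ K, G.eval w = true) v
  · intro v
    rw [hA v, retract2_char K hK p q v]
    rw [exists_update_swap p q (fun w => ∀ G ∈ K, G.eval w = true) v]
    exact ⟨fun ⟨a, b, h⟩ => ⟨b, a, h⟩, fun ⟨a, b, h⟩ => ⟨b, a, h⟩⟩
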